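/- Let γ : Fin n → ℝ with 0 < γ_i < 1 for all i, let ŷ ∈ 𝔽₂ⁿ, let P be the associated likelihood weight, let I ⊆ Fin n be an index set, and let T = {ŷ ⊕ 1_K : K ⊆ I} be the set of Chase testwords. Then the total likelihood of the union over all testwords of their restricted radius-1 Hamming balls with respect to the coordinates outside I satisfies P(⋃_{τ ∈ T} B_1(τ, I)) = (1 + Σ_{j ∉ I} (1 − γ_j)/γ_j) · ∏_{j ∉ I} γ_j. -/

import Mathlib

open Finset

/-- The restricted Hamming ball `B_r(v, K)`: vectors within Hamming distance
`r` of `v` that agree with `v` on all positions in `K`. -/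
def rBall {n : ℕ} (r : ℕ) (v : Fin n → ZMod 2) (K : Finset (Fin n)) :
    Finset (Fin n → ZMod 2) :=
  Finset.univ.filter (fun w => hammingDist v w ≤ r ∧ ∀ i ∈ K, w i = v i)

/-- The likelihood weight of a vector `v`, given parameters `γ` and
hard-decision vector `yh`. -/
def lik {n : ℕ} (γ : Fin n → ℝ) (yh : Fin n → ZMod 2) (v : Fin n → ZMod 2) : ℝ :=
  ∏ i, if v i = yh i then γ i else 1 - γ i

/-- The indicator vector `1_K ∈ 𝔽₂ⁿ` of a set of positions `K`. -/
def indicatorVec {n : ℕ} (K : Finset (Fin n)) : Fin n → ZMod 2 :=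
  fun i => if i ∈ K then 1 else 0

/-- The Chase testword obtained from the hard decision `yh` by flipping the
positions in `K`, i.e. `ŷ ⊕ 1_K`. -/
def chaseTestword {n : ℕ} (yh : Fin n → ZMod 2) (K : Finset (Fin n)) :
    Fin n → ZMod 2 :=
  fun i => yh i + indicatorVec K i

/-! Every word is `chaseTestword yh S` for its flip set `S = {i | w i ≠ yh i}`. The testwords
absorb any flip pattern inside `I`, so the union of the balls consists exactly of the words whose
flip set has at most one element outside `I`. The likelihood of `chaseTestword yh S` is a product
over the coordinates, which splits into a factor over `I` and one over `Iᶜ`: summing over the free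
flips inside `I` gives `∏ i ∈ I, ((1 - γ i) + γ i) = 1`, and the flips outside `I` are either none
or a single `j`, giving `∏ j ∈ Iᶜ, γ j` times `1 + ∑ j ∈ Iᶜ, (1 - γ j) / γ j`. -/

section ProdIte

variable {ι R : Type*} [DecidableEq ι] [CommSemiring R] (a b : ι → R)

theorem Finset.sum_powerset_prod_ite (s : Finset ι) :
    ∑ T ∈ s.powerset, ∏ i ∈ s, (if i ∈ T then a i else b i) = ∏ i ∈ s, (a i + b i) := by
  rw [prod_add]
  refine sum_congr rfl fun T hT => ?_
  rw [prod_ite, filter_mem_eq_inter, inter_eq_right.2 (mem_powerset.1 hT), ← sdiff_eq_filter]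

theorem Finset.sum_powerset_card_le_one_prod_ite (s : Finset ι) :
    ∑ T ∈ s.powerset with #T ≤ 1, ∏ i ∈ s, (if i ∈ T then a i else b i) =
      ∏ i ∈ s, b i + ∑ j ∈ s, a j * ∏ i ∈ s.erase j, b i := by
  have hsets : {T ∈ s.powerset | #T ≤ 1} = insert ∅ (s.map ⟨singleton, singleton_injective⟩) := by
    ext T
    simp only [mem_filter, mem_powerset, mem_insert, mem_map, Function.Embedding.coeFn_mk,
      Nat.le_one_iff_eq_zero_or_eq_one, card_eq_zero, card_eq_one]
    constructor
    · rintro ⟨hT, rfl | ⟨j, rfl⟩⟩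
      exacts [Or.inl rfl, Or.inr ⟨j, singleton_subset_iff.1 hT, rfl⟩]
    · rintro (rfl | ⟨j, hj, rfl⟩)
      exacts [⟨empty_subset s, Or.inl rfl⟩, ⟨singleton_subset_iff.2 hj, Or.inr ⟨j, rfl⟩⟩]
  have hsingle : ∀ j ∈ s, ∏ i ∈ s, (if i ∈ ({j} : Finset ι) then a i else b i) =
      a j * ∏ i ∈ s.erase j, b i := by
    intro j hj
    rw [← mul_prod_erase s _ hj, if_pos (mem_singleton_self j)]
    congr 1
    exact prod_congr rfl fun i hi => if_neg (notMem_singleton.2 (ne_of_mem_erase hi))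
  rw [hsets, sum_insert (by simp), sum_map]
  simp only [notMem_empty, if_false, Function.Embedding.coeFn_mk]
  rw [sum_congr rfl hsingle]

theorem Finset.sum_card_sdiff_le_one_prod_ite [Fintype ι] (I : Finset ι) :
    ∑ S with #(S \ I) ≤ 1, ∏ i, (if i ∈ S then a i else b i) =
      (∏ i ∈ I, (a i + b i)) * (∏ i ∈ Iᶜ, b i + ∑ j ∈ Iᶜ, a j * ∏ i ∈ Iᶜ.erase j, b i) := by
  rw [← sum_powerset_prod_ite, ← sum_powerset_card_le_one_prod_ite, sum_mul_sum, ← sum_product']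
  refine sum_nbij' (fun S => (S ∩ I, S \ I)) (fun p => p.1 ∪ p.2) ?_ ?_ ?_ ?_ ?_
  · intro S hS
    simp_all [subset_compl_iff_disjoint_right, disjoint_sdiff_self_left]
  · rintro ⟨A, B⟩ hAB
    simp only [mem_product, mem_powerset, mem_filter, mem_univ, true_and] at hAB ⊢
    obtain ⟨hA, -, hcard⟩ := hAB
    refine (card_le_card fun i hi => ?_).trans hcard
    simp only [mem_sdiff, mem_union] at hi
    exact hi.1.resolve_left fun h => hi.2 (hA h)
  · intro S _
    exact sup_inf_sdiff S I
  · rintro ⟨A, B⟩ hAB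
    simp only [mem_product, mem_powerset, mem_filter, subset_compl_iff_disjoint_right] at hAB
    simp [union_inter_distrib_right, inter_eq_left.2 hAB.1, disjoint_iff_inter_eq_empty.1 hAB.2.1,
      union_sdiff_distrib, sdiff_eq_empty_iff_subset.2 hAB.1, hAB.2.1.sdiff_eq_left]
  · intro S _
    rw [← prod_mul_prod_compl I]
    congr 1 <;> refine prod_congr rfl fun i hi => ?_ <;> simp_all

end ProdIte

section Chase

variable {n : ℕ} (yh : Fin n → ZMod 2)

theorem chaseTestword_apply_eq_iff {K L : Finset (Fin n)} {i : Fin n} :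
    chaseTestword yh K i = chaseTestword yh L i ↔ (i ∈ K ↔ i ∈ L) := by
  by_cases hK : i ∈ K <;> by_cases hL : i ∈ L <;> simp [chaseTestword, indicatorVec, hK, hL]

theorem chaseTestword_apply_eq_self_iff {K : Finset (Fin n)} {i : Fin n} :
    chaseTestword yh K i = yh i ↔ i ∉ K := by
  by_cases hK : i ∈ K <;> simp [chaseTestword, indicatorVec, hK]

theorem chaseTestword_injective : Function.Injective (chaseTestword yh) :=
  fun _ _ h => ext fun i => (chaseTestword_apply_eq_iff yh).1 (congrFun h i)

theorem chaseTestword_surjective : Function.Surjective (chaseTestword yh) := by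
  intro w
  refine ⟨({i | w i ≠ yh i} : Finset (Fin n)), funext fun i => ?_⟩
  have hflip : ∀ x y : ZMod 2, x ≠ y → y + 1 = x := by decide
  by_cases h : w i = yh i
  · simp [chaseTestword, indicatorVec, h]
  · simpa [chaseTestword, indicatorVec, h] using hflip _ _ h

theorem hammingDist_chaseTestword (K L : Finset (Fin n)) :
    hammingDist (chaseTestword yh K) (chaseTestword yh L) = #(symmDiff K L) := by
  unfold hammingDist
  congr 1
  ext i
  simp only [mem_filter, mem_univ, true_and, ne_eq, chaseTestword_apply_eq_iff, mem_symmDiff]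
  tauto

theorem lik_chaseTestword (γ : Fin n → ℝ) (K : Finset (Fin n)) :
    lik γ yh (chaseTestword yh K) = ∏ i, if i ∈ K then 1 - γ i else γ i :=
  prod_congr rfl fun i _ => by
    by_cases hK : i ∈ K <;> simp [chaseTestword_apply_eq_self_iff, hK]

theorem biUnion_rBall_one_chaseTestword (I : Finset (Fin n)) :
    (I.powerset.image (chaseTestword yh)).biUnion (fun τ => rBall 1 τ I) =
      ({S | #(S \ I) ≤ 1} : Finset _).image (chaseTestword yh) := by
  ext w
  obtain ⟨S, rfl⟩ := chaseTestword_surjective yh w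
  simp only [mem_biUnion, mem_image, mem_powerset, exists_exists_and_eq_and, rBall, mem_filter,
    mem_univ, true_and, hammingDist_chaseTestword, chaseTestword_apply_eq_iff,
    (chaseTestword_injective yh).eq_iff, exists_eq_right]
  constructor
  · rintro ⟨K, hKI, hdist, -⟩
    refine (card_le_card fun i hi => ?_).trans hdist
    simp only [mem_sdiff] at hi
    simp only [mem_symmDiff]
    exact Or.inr ⟨hi.1, fun hK => hi.2 (hKI hK)⟩
  · intro hS
    refine ⟨S ∩ I, inter_subset_right, (card_le_card fun i hi => ?_).trans hS, fun i hi => ?_⟩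
    · simp only [mem_symmDiff, mem_inter, mem_sdiff] at hi ⊢
      tauto
    · simp [hi]

end Chase

/-- The likelihood of the union over all Chase testwords of their restricted
radius-1 Hamming balls with respect to the coordinates outside `I`:
`P(⋃_{τ ∈ T} B_1(τ, I)) = (1 + Σ_{j ∉ I} (1−γ_j)/γ_j) · ∏_{j ∉ I} γ_j`. -/
theorem likelihood_union_chase_balls_one
    (n : ℕ) (γ : Fin n → ℝ) (hγ : ∀ i, 0 < γ i ∧ γ i < 1)
    (yh : Fin n → ZMod 2) (I : Finset (Fin n)) :
    ∑ w ∈ (I.powerset.image (chaseTestword yh)).biUnion (fun τ => rBall 1 τ I),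
        lik γ yh w =
      (1 + ∑ j ∈ Iᶜ, (1 - γ j) / γ j) * ∏ j ∈ Iᶜ, γ j := by
  rw [biUnion_rBall_one_chaseTestword, sum_image fun _ _ _ _ h => chaseTestword_injective yh h]
  simp only [lik_chaseTestword, sum_card_sdiff_le_one_prod_ite, sub_add_cancel, prod_const_one,
    one_mul, add_mul, sum_mul]
  congr 1
  refine sum_congr rfl fun j hj => ?_
  rw [← mul_prod_erase _ γ hj, ← mul_assoc, div_mul_cancel₀ _ (hγ j).1.ne']
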